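/- The bottleneck distance is an extended metric on the set of finite barcodes: it is symmetric, satisfies d_bot(B, B) = 0 and the triangle inequality d_bot(B1, B3) ≤ d_bot(B1, B2) + d_bot(B2, B3), and it separates points, i.e. if d_bot(B1, B2) = 0 for finite barcodes B1, B2 then B1 = B2. -/

import Mathlib

/-! Partial matchings compose: split both of them along the bars of the middle family that are
matched on both sides. A bar left over by the composite was either unmatched, or matched to a bar
left over by the other matching, and moving a bar by `ε` changes its length by at most `2ε`.
Two representatives of a barcode differ only by trivial bars, which can be added unmatched to
either side, so the matchings can be composed across barcodes, giving the triangle inequality.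

For separation, take `δ > 0` below half the length of every bar of `B1` and below every nonzero
distance between a bar of `B1` and a bar of `B2`. An `ε`-matching with `ε < δ` has to match every
bar of `B1`, and to an equal bar of `B2`; so `B1 ≤ B2` as multisets, and symmetrically. -/

open scoped ENNReal Classical

/-- A bar `(a, b]` with `-∞ ≤ a ≤ b ≤ +∞`, encoded by its pair of endpoints in `EReal`. -/
abbrev Bar : Type := EReal × EReal

/-- The distance `|x - y|` between two extended-real endpoints, with the conventions that
equal endpoints (possibly infinite) are at distance `0` and distinct endpoints one of which
is infinite are at distance `∞`. -/
noncomputable def erealDist (x y : EReal) : ℝ≥0∞ :=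
  if x = y then 0
  else if x = ⊤ ∨ x = ⊥ ∨ y = ⊤ ∨ y = ⊥ then ⊤
  else ENNReal.ofReal |x.toReal - y.toReal|

/-- `d((a,b], (c,d]) = max (|c - a|) (|d - b|)`. -/
noncomputable def barDist (I J : Bar) : ℝ≥0∞ :=
  max (erealDist I.1 J.1) (erealDist I.2 J.2)

/-- The length of the bar `(a, b]`. -/
noncomputable def barLength (I : Bar) : ℝ≥0∞ := erealDist I.1 I.2

/-- A (finite) barcode: an equivalence class of finite families of intervals, described by
its canonical representative, the finite multiset of its nontrivial intervals. -/
structure Barcode where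
  bars : Multiset Bar
  nontrivial : ∀ I ∈ bars, I.1 < I.2

/-- The multiset of nontrivial intervals of a family of intervals. -/
noncomputable def reduceBars (s : Multiset Bar) : Multiset Bar :=
  s.filter fun I => I.1 < I.2

/-- A finite family of intervals (possibly containing trivial intervals) represents the
barcode `B` if its nontrivial intervals are exactly those of `B`. -/
def Represents (s : Multiset Bar) (B : Barcode) : Prop :=
  (∀ I ∈ s, I.1 ≤ I.2) ∧ reduceBars s = B.bars

/-- A partial matching between two families of intervals, realizing the bound `ε`:
a bijection between sub-families moving intervals at most `ε`, all remaining intervals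
having length at most `2ε`. -/
def IsPartialMatching (s t : Multiset Bar) (ε : ℝ≥0∞) : Prop :=
  ∃ P : Multiset (Bar × Bar),
    P.map Prod.fst ≤ s ∧ P.map Prod.snd ≤ t ∧
    (∀ p ∈ P, barDist p.1 p.2 ≤ ε) ∧
    (∀ I ∈ s - P.map Prod.fst, barLength I ≤ 2 * ε) ∧
    (∀ I ∈ t - P.map Prod.snd, barLength I ≤ 2 * ε)

/-- The bottleneck distance between two barcodes. -/
noncomputable def dBot (B1 B2 : Barcode) : ℝ≥0∞ :=
  sInf {ε : ℝ≥0∞ | ∃ s t : Multiset Bar,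
    Represents s B1 ∧ Represents t B2 ∧ IsPartialMatching s t ε}

namespace Multiset

variable {α β γ : Type*}

theorem rel_iff_exists_map_fst_snd {r : α → β → Prop} {s : Multiset α} {t : Multiset β} :
    Rel r s t ↔ ∃ P : Multiset (α × β), P.map Prod.fst = s ∧ P.map Prod.snd = t ∧
      ∀ p ∈ P, r p.1 p.2 := by
  constructor
  · intro h
    induction h with
    | zero => exact ⟨0, rfl, rfl, by simp⟩
    | @cons a b _ _ hab _ ih =>
      obtain ⟨P, rfl, rfl, hP⟩ := ih
      exact ⟨(a, b) ::ₘ P, by simp, by simp, by simpa [hab] using hP⟩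
  · rintro ⟨P, rfl, rfl, hP⟩
    exact rel_map.2 (rel_refl_of_refl_on hP)

theorem Rel.comp {r : α → β → Prop} {p : β → γ → Prop} {s : Multiset α} {t : Multiset β}
    {u : Multiset γ} (hst : Rel r s t) (htu : Rel p t u) : Rel (Relation.Comp r p) s u := by
  induction hst generalizing u with
  | zero => simpa using htu
  | cons hab _ ih =>
    obtain ⟨c, u', hbc, htu', rfl⟩ := rel_cons_left.1 htu
    exact (ih htu').cons ⟨_, hab, hbc⟩

end Multiset

open Multiset

lemma erealDist_self (x : EReal) : erealDist x x = 0 := if_pos rfl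

lemma erealDist_comm (x y : EReal) : erealDist x y = erealDist y x := by
  unfold erealDist
  rw [abs_sub_comm]
  simp only [eq_comm (a := x), or_comm, or_left_comm]

lemma erealDist_coe (a b : ℝ) : erealDist a b = edist a b := by
  by_cases h : a = b
  · simp [h, erealDist_self]
  · simp [erealDist, h, edist_dist, Real.dist_eq]

lemma erealDist_eq_top {x y : EReal} (hxy : x ≠ y) (h : x = ⊤ ∨ x = ⊥ ∨ y = ⊤ ∨ y = ⊥) :
    erealDist x y = ⊤ := by
  simp [erealDist, hxy, h]

lemma erealDist_eq_zero_iff {x y : EReal} : erealDist x y = 0 ↔ x = y := by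
  refine ⟨fun h => ?_, fun h => h ▸ erealDist_self x⟩
  by_contra hxy
  induction x using EReal.rec <;> induction y using EReal.rec <;>
    simp_all [erealDist_eq_top, erealDist_coe]

lemma erealDist_triangle (x y z : EReal) : erealDist x z ≤ erealDist x y + erealDist y z := by
  rcases eq_or_ne x y with rfl | hxy
  · simp [erealDist_self]
  rcases eq_or_ne y z with rfl | hyz
  · simp [erealDist_self]
  induction x using EReal.rec <;> induction y using EReal.rec <;> induction z using EReal.rec <;>
    simp_all [erealDist_eq_top, erealDist_coe, edist_triangle]

lemma barDist_self (I : Bar) : barDist I I = 0 := by simp [barDist, erealDist_self]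

lemma barDist_comm (I J : Bar) : barDist I J = barDist J I := by
  rw [barDist, barDist, erealDist_comm I.1, erealDist_comm I.2]

lemma barDist_eq_zero_iff {I J : Bar} : barDist I J = 0 ↔ I = J := by
  simp [barDist, erealDist_eq_zero_iff, Prod.ext_iff]

lemma erealDist_fst_le_barDist (I J : Bar) : erealDist I.1 J.1 ≤ barDist I J := le_max_left _ _

lemma erealDist_snd_le_barDist (I J : Bar) : erealDist I.2 J.2 ≤ barDist I J := le_max_right _ _

lemma barDist_triangle (I J K : Bar) : barDist I K ≤ barDist I J + barDist J K :=
  max_le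
    ((erealDist_triangle _ J.1 _).trans
      (add_le_add (erealDist_fst_le_barDist I J) (erealDist_fst_le_barDist J K)))
    ((erealDist_triangle _ J.2 _).trans
      (add_le_add (erealDist_snd_le_barDist I J) (erealDist_snd_le_barDist J K)))

lemma barLength_le_add (I J : Bar) : barLength I ≤ barLength J + 2 * barDist I J :=
  calc barLength I ≤ erealDist I.1 J.1 + erealDist J.1 J.2 + erealDist J.2 I.2 :=
        (erealDist_triangle _ _ _).trans (by grw [erealDist_triangle J.1 J.2 I.2, add_assoc])
    _ ≤ barDist I J + barLength J + barDist I J := by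
        rw [erealDist_comm J.2]
        gcongr
        exacts [erealDist_fst_le_barDist I J, le_rfl, erealDist_snd_le_barDist I J]
    _ = barLength J + 2 * barDist I J := by ring

lemma isPartialMatching_iff {s t : Multiset Bar} {ε : ℝ≥0∞} :
    IsPartialMatching s t ε ↔ ∃ s₁ ≤ s, ∃ t₁ ≤ t, Rel (fun I J => barDist I J ≤ ε) s₁ t₁ ∧
      (∀ I ∈ s - s₁, barLength I ≤ 2 * ε) ∧ (∀ J ∈ t - t₁, barLength J ≤ 2 * ε) := by
  constructor
  · rintro ⟨P, hPs, hPt, hP, hs, ht⟩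
    exact ⟨_, hPs, _, hPt, rel_iff_exists_map_fst_snd.2 ⟨P, rfl, rfl, hP⟩, hs, ht⟩
  · rintro ⟨s₁, hs₁, t₁, ht₁, hrel, hs, ht⟩
    obtain ⟨P, rfl, rfl, hP⟩ := rel_iff_exists_map_fst_snd.1 hrel
    exact ⟨P, hs₁, ht₁, hP, hs, ht⟩

lemma isPartialMatching_refl (s : Multiset Bar) : IsPartialMatching s s 0 :=
  isPartialMatching_iff.2 ⟨s, le_rfl, s, le_rfl,
    rel_refl_of_refl_on fun I _ => (barDist_self I).le, by simp, by simp⟩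

lemma rel_barDist_le_symm {a b : Multiset Bar} {ε : ℝ≥0∞}
    (h : Rel (fun I J => barDist I J ≤ ε) a b) : Rel (fun I J => barDist I J ≤ ε) b a :=
  rel_flip.1 (h.mono fun I _ J _ hIJ => by rwa [flip, barDist_comm])

lemma barLength_le_of_rel {a b : Multiset Bar} {ε δ : ℝ≥0∞}
    (hab : Rel (fun I J => barDist I J ≤ ε) a b) (hb : ∀ J ∈ b, barLength J ≤ δ) :
    ∀ I ∈ a, barLength I ≤ δ + 2 * ε := by
  intro I hI
  obtain ⟨J, hJ, hIJ⟩ := exists_mem_of_rel_of_mem hab hI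
  calc barLength I ≤ barLength J + 2 * barDist I J := barLength_le_add I J
    _ ≤ δ + 2 * ε := by gcongr; exact hb J hJ

namespace IsPartialMatching

variable {s t u : Multiset Bar} {ε ε' : ℝ≥0∞}

lemma symm (h : IsPartialMatching s t ε) : IsPartialMatching t s ε := by
  obtain ⟨s₁, hs₁, t₁, ht₁, hrel, hs, ht⟩ := isPartialMatching_iff.1 h
  exact isPartialMatching_iff.2 ⟨t₁, ht₁, s₁, hs₁, rel_barDist_le_symm hrel, ht, hs⟩

lemma add_right {w : Multiset Bar} (h : IsPartialMatching s t ε)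
    (hw : ∀ J ∈ w, barLength J ≤ 2 * ε) : IsPartialMatching s (t + w) ε := by
  obtain ⟨s₁, hs₁, t₁, ht₁, hrel, hs, ht⟩ := isPartialMatching_iff.1 h
  refine isPartialMatching_iff.2 ⟨s₁, hs₁, t₁, ht₁.trans (le_add_right _ _), hrel, hs, ?_⟩
  rw [← tsub_add_eq_add_tsub ht₁]
  intro J hJ
  exact (mem_add.1 hJ).elim (ht J) (hw J)

lemma add_left {w : Multiset Bar} (h : IsPartialMatching s t ε)
    (hw : ∀ I ∈ w, barLength I ≤ 2 * ε) : IsPartialMatching (s + w) t ε :=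
  (h.symm.add_right hw).symm

lemma trans (h₁ : IsPartialMatching s t ε) (h₂ : IsPartialMatching t u ε') :
    IsPartialMatching s u (ε + ε') := by
  obtain ⟨s₁, hs₁, t₁, ht₁, hrel₁, hs, ht⟩ := isPartialMatching_iff.1 h₁
  obtain ⟨t₂, ht₂, u₂, hu₂, hrel₂, ht', hu⟩ := isPartialMatching_iff.1 h₂
  obtain ⟨s₀, s₃, hrel₀, hrel₃, rfl⟩ := rel_add_right.1
    (add_tsub_cancel_of_le (inter_le_left (s := t₁) (t := t₂)) ▸ hrel₁)
  obtain ⟨u₀, u₃, hrel₀', hrel₃', rfl⟩ := rel_add_left.1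
    (add_tsub_cancel_of_le (inter_le_right (s := t₁) (t := t₂)) ▸ hrel₂)
  refine isPartialMatching_iff.2 ⟨s₀, (le_add_right _ _).trans hs₁, u₀,
    (le_add_right _ _).trans hu₂, (hrel₀.comp hrel₀').mono ?_, ?_, ?_⟩
  · rintro I - K - ⟨J, hIJ, hJK⟩
    exact (barDist_triangle I J K).trans (add_le_add hIJ hJK)
  · have hs₀ : s - s₀ ≤ (s - (s₀ + s₃)) + s₃ := by
      simpa using tsub_le_tsub_add_tsub (a := s) (b := s₀ + s₃) (c := s₀)
    intro I hI
    rcases mem_add.1 (mem_of_le hs₀ hI) with hI | hI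
    · exact (hs I hI).trans (by gcongr; exact le_self_add)
    · refine (barLength_le_of_rel hrel₃ (fun J hJ => ht' J ?_) I hI).trans_eq (by ring)
      rw [sub_inter] at hJ
      exact mem_of_le (tsub_le_tsub_right ht₁ _) hJ
  · have hu₀ : u - u₀ ≤ (u - (u₀ + u₃)) + u₃ := by
      simpa using tsub_le_tsub_add_tsub (a := u) (b := u₀ + u₃) (c := u₀)
    intro K hK
    rcases mem_add.1 (mem_of_le hu₀ hK) with hK | hK
    · exact (hu K hK).trans (by gcongr; exact le_add_self)
    · refine (barLength_le_of_rel (rel_barDist_le_symm hrel₃') (fun J hJ => ht J ?_) K hK).trans_eq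
        (by ring)
      rw [inter_comm, sub_inter] at hJ
      exact mem_of_le (tsub_le_tsub_right ht₂ _) hJ

end IsPartialMatching

lemma represents_bars (B : Barcode) : Represents B.bars B :=
  ⟨fun I hI => (B.nontrivial I hI).le, filter_eq_self.2 B.nontrivial⟩

namespace Represents

variable {t t' : Multiset Bar} {B : Barcode}

lemma barLength_eq_zero (ht : Represents t B) {I : Bar} (hI : I ∈ t) (hI' : ¬ I.1 < I.2) :
    barLength I = 0 :=
  erealDist_eq_zero_iff.2 (le_antisymm (ht.1 I hI) (not_lt.1 hI'))

lemma add_filter_not_lt_comm (ht : Represents t B) (ht' : Represents t' B) :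
    t + t'.filter (fun I => ¬ I.1 < I.2) = t' + t.filter (fun I => ¬ I.1 < I.2) := by
  conv_lhs => rw [← filter_add_not (fun I : Bar => I.1 < I.2) t]
  conv_rhs => rw [← filter_add_not (fun I : Bar => I.1 < I.2) t']
  rw [← reduceBars, ← reduceBars, ht.2, ht'.2, add_right_comm]

end Represents

def Matchable (B₁ B₂ : Barcode) (ε : ℝ≥0∞) : Prop :=
  ∃ s t : Multiset Bar, Represents s B₁ ∧ Represents t B₂ ∧ IsPartialMatching s t ε

lemma dBot_eq_sInf (B₁ B₂ : Barcode) : dBot B₁ B₂ = sInf {ε | Matchable B₁ B₂ ε} := rfl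

namespace Matchable

variable {A C D : Barcode} {ε ε' : ℝ≥0∞}

lemma refl (B : Barcode) : Matchable B B 0 :=
  ⟨_, _, represents_bars B, represents_bars B, isPartialMatching_refl _⟩

lemma symm (h : Matchable A C ε) : Matchable C A ε :=
  let ⟨s, t, hs, ht, hm⟩ := h
  ⟨t, s, ht, hs, hm.symm⟩

lemma trans (h₁ : Matchable A C ε) (h₂ : Matchable C D ε') : Matchable A D (ε + ε') := by
  obtain ⟨s, t, hs, ht, hm₁⟩ := h₁
  obtain ⟨t', u, ht', hu, hm₂⟩ := h₂
  have hm₁' := hm₁.add_right (w := t'.filter fun I => ¬ I.1 < I.2) fun J hJ => by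
    rw [ht'.barLength_eq_zero (mem_filter.1 hJ).1 (mem_filter.1 hJ).2]; exact zero_le
  have hm₂' := hm₂.add_left (w := t.filter fun I => ¬ I.1 < I.2) fun J hJ => by
    rw [ht.barLength_eq_zero (mem_filter.1 hJ).1 (mem_filter.1 hJ).2]; exact zero_le
  rw [ht.add_filter_not_lt_comm ht'] at hm₁'
  exact ⟨s, u, hs, hu, hm₁'.trans hm₂'⟩

lemma bars_le (h : Matchable A C ε) (hlen : ∀ I ∈ A.bars, 2 * ε < barLength I)
    (hdist : ∀ I ∈ A.bars, ∀ J ∈ C.bars, barDist I J ≤ ε → I = J) : A.bars ≤ C.bars := by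
  obtain ⟨s, t, hs, ht, hm⟩ := h
  obtain ⟨s₁, hs₁, t₁, ht₁, hrel, hleft, -⟩ := isPartialMatching_iff.1 hm
  have hA : A.bars ≤ s₁ := by
    have hnil : reduceBars (s - s₁) = 0 := filter_eq_nil.2 fun I hI hlt =>
      (hleft I hI).not_gt (hlen I (hs.2 ▸ mem_filter.2 ⟨mem_of_le tsub_le_self hI, hlt⟩))
    rw [← hs.2, ← add_tsub_cancel_of_le hs₁]
    unfold reduceBars at hnil ⊢
    rw [filter_add, hnil, add_zero]
    exact filter_le _ _
  obtain ⟨t', t'', hrel', -, rfl⟩ := rel_add_left.1 ((add_tsub_cancel_of_le hA).symm ▸ hrel)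
  have ht' : t' ≤ t := (le_add_right t' t'').trans ht₁
  have hAt' : A.bars = t' := rel_eq.1 <| hrel'.mono fun I hI J hJ hIJ => by
    refine hdist I hI J (ht.2 ▸ mem_filter.2 ⟨mem_of_le ht' hJ, ?_⟩) hIJ
    by_contra hJ'
    have hI' := barLength_le_add I J
    rw [ht.barLength_eq_zero (mem_of_le ht' hJ) hJ', zero_add] at hI'
    exact (hlen I hI).not_ge (hI'.trans (by gcongr))
  calc A.bars = A.bars.filter (fun I => I.1 < I.2) := (filter_eq_self.2 A.nontrivial).symm
    _ ≤ reduceBars t := filter_le_filter _ (hAt' ▸ ht')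
    _ = C.bars := ht.2

end Matchable

lemma exists_rigidity_radius (A C : Barcode) : ∃ δ > 0, ∀ ε < δ,
    (∀ I ∈ A.bars, 2 * ε < barLength I) ∧
    (∀ I ∈ A.bars, ∀ J ∈ C.bars, barDist I J ≤ ε → I = J) := by
  let F : Finset ℝ≥0∞ := (A.bars.map fun I => barLength I / 2).toFinset ∪
    ((A.bars ×ˢ C.bars).map fun p => barDist p.1 p.2).toFinset.filter (· ≠ 0)
  refine ⟨F.inf id, (Finset.lt_inf_iff ENNReal.zero_lt_top).2 ?_, fun ε hε => ?_⟩
  · simp only [F, Finset.mem_union, Finset.mem_filter, mem_toFinset, mem_map, id]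
    rintro _ (⟨I, hI, rfl⟩ | ⟨-, hne⟩)
    · exact ENNReal.div_pos_iff.2 ⟨fun h => (A.nontrivial I hI).ne (erealDist_eq_zero_iff.1 h),
        ENNReal.ofNat_ne_top⟩
    · exact pos_iff_ne_zero.2 hne
  have hF := (Finset.lt_inf_iff (hε.trans_le le_top)).1 hε
  simp only [F, Finset.mem_union, Finset.mem_filter, mem_toFinset, mem_map, id] at hF
  refine ⟨fun I hI => ?_, fun I hI J hJ hIJ => ?_⟩
  · rw [mul_comm, ← ENNReal.lt_div_iff_mul_lt (by simp) (by simp)]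
    exact hF _ (Or.inl ⟨I, hI, rfl⟩)
  · by_contra hne
    exact (hF _ (Or.inr ⟨⟨(I, J), mem_product.2 ⟨hI, hJ⟩, rfl⟩,
      fun h => hne (barDist_eq_zero_iff.1 h)⟩)).not_ge hIJ

lemma dBot_self (B : Barcode) : dBot B B = 0 :=
  le_antisymm (sInf_le (Matchable.refl B)) zero_le

lemma dBot_comm (A C : Barcode) : dBot A C = dBot C A := by
  simp only [dBot_eq_sInf]
  exact congrArg sInf (Set.ext fun _ => ⟨Matchable.symm, Matchable.symm⟩)

lemma dBot_triangle (A C D : Barcode) : dBot A D ≤ dBot A C + dBot C D := by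
  rw [dBot_eq_sInf A C, dBot_eq_sInf C D, sInf_eq_iInf', sInf_eq_iInf']
  exact ENNReal.le_iInf_add_iInf fun e₁ e₂ => sInf_le (e₁.2.trans e₂.2)

lemma bars_le_of_dBot_eq_zero {A C : Barcode} (h : dBot A C = 0) : A.bars ≤ C.bars := by
  obtain ⟨δ, hδ, hrigid⟩ := exists_rigidity_radius A C
  obtain ⟨ε, hε, hεδ⟩ := sInf_lt_iff.1 (h ▸ hδ : dBot A C < δ)
  exact Matchable.bars_le hε (hrigid ε hεδ).1 (hrigid ε hεδ).2

/-- The bottleneck distance is an extended metric on the set of finite barcodes: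
reflexivity, symmetry, triangle inequality, and separation of points. -/
theorem stmt5 (B B1 B2 B3 : Barcode) :
    dBot B B = 0 ∧
    dBot B1 B2 = dBot B2 B1 ∧
    dBot B1 B3 ≤ dBot B1 B2 + dBot B2 B3 ∧
    (dBot B1 B2 = 0 → B1 = B2) := by
  refine ⟨dBot_self B, dBot_comm B1 B2, dBot_triangle B1 B2 B3, fun h => ?_⟩
  have hbars : B1.bars = B2.bars :=
    le_antisymm (bars_le_of_dBot_eq_zero h) (bars_le_of_dBot_eq_zero (dBot_comm B1 B2 ▸ h))
  cases B1; cases B2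
  congr
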